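/- arXiv:1408.5447 — 6 statements merged into one kernel-verified Lean document; each statement's English description precedes it below -/
import Mathlib

section
/- Let f be a Barenblatt profile with exponent α. Then the equation α·f(η) + η·f'(η) = 0 has a solution η > 0 if and only if α > N − 2. -/
/-!
With `F = αf + ηf'` one has `(η^α f)' = η^(α-1) F`, and where `F > 0` the equation is the linear
one `f'' + ((N-1)/η) f' = -k F`, `k = (1-γ)/2`. Then `F' = -(N-2-α)(F - αf)/η - kηF`, so
`W = η^(N-2-α) e^(kη²/2) F` satisfies `W' = (N-2-α) α η^(N-3-α) e^(kη²/2) f`. Since `F(0) = α > 0`,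
`η^α f` increases, hence `f > 0`, as long as `F` stays positive, and there `W'` has the sign
of `N-2-α`.

If `α ≤ N-2` and `F` has a first zero `η₀`, then `W` is nondecreasing on `(0, η₀]`, positive inside
and zero at `η₀`: impossible. If `α > N-2` and `F` never vanishes, then `f ≥ f(1) η^(-α)` for
`η ≥ 1`, the Gaussian factor makes `W' ≤ -δ < 0` eventually, and `W → -∞` contradicts `W > 0`.
-/

/-- A Barenblatt profile with exponent `α` (dimension `N`, parameter `γ`). -/
def IsBarenblattProfile (N : ℕ) (γ α : ℝ) (f f' f'' : ℝ → ℝ) : Prop :=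
  (∀ η ∈ Set.Ici (0:ℝ), HasDerivWithinAt f (f' η) (Set.Ici 0) η) ∧
  ContinuousOn f' (Set.Ici 0) ∧
  (∀ η ∈ Set.Ioi (0:ℝ), HasDerivWithinAt f' (f'' η) (Set.Ioi 0) η) ∧
  f 0 = 1 ∧ f' 0 = 0 ∧
  (∀ η : ℝ, 0 < η →
    f'' η + (((N : ℝ) - 1) / η) * f' η =
      -(1/2) * (α * f η + η * f' η) + (γ/2) * |α * f η + η * f' η|)

open Set Filter Real

def profileF (α : ℝ) (f f' : ℝ → ℝ) (η : ℝ) : ℝ := α * f η + η * f' η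

noncomputable def profileW (n k α : ℝ) (f f' : ℝ → ℝ) (η : ℝ) : ℝ :=
  η ^ (n - 2 - α) * exp (k * η ^ 2 / 2) * profileF α f f' η

section Calculus

variable {n k α η : ℝ} {f f' f'' : ℝ → ℝ}

lemma hasDerivAt_rpow_mul (α : ℝ) (hη : 0 < η) (hf : HasDerivAt f (f' η) η) :
    HasDerivAt (fun x => x ^ α * f x) (η ^ (α - 1) * profileF α f f' η) η := by
  refine ((hasDerivAt_rpow_const (Or.inl hη.ne')).mul hf).congr_deriv ?_
  rw [profileF, show η ^ α = η ^ (α - 1) * η by rw [← rpow_add_one hη.ne']; ring_nf]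
  ring

lemma strictMonoOn_rpow_mul {D : Set ℝ} (hα : 0 ≤ α) (hD : Convex ℝ D) (hD₀ : D ⊆ Ici 0)
    (hfc : ContinuousOn f D) (hf : ∀ x, 0 < x → HasDerivAt f (f' x) x)
    (hF : ∀ x ∈ interior D, 0 < profileF α f f' x) :
    StrictMonoOn (fun x => x ^ α * f x) D := by
  have hpos : ∀ x ∈ interior D, 0 < x := fun x hx => by
    simpa using interior_mono hD₀ hx
  refine strictMonoOn_of_hasDerivWithinAt_pos hD
    ((continuousOn_id.rpow_const fun _ _ => Or.inr hα).mul hfc)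
    (fun x hx => (hasDerivAt_rpow_mul α (hpos x hx) (hf x (hpos x hx))).hasDerivWithinAt)
    fun x hx => mul_pos (rpow_pos_of_pos (hpos x hx) _) (hF x hx)

lemma profileW_pos_iff (hη : 0 < η) :
    0 < profileW n k α f f' η ↔ 0 < profileF α f f' η :=
  mul_pos_iff_of_pos_left (mul_pos (rpow_pos_of_pos hη _) (exp_pos _))

lemma hasDerivAt_profileW (hη : 0 < η) (hf : HasDerivAt f (f' η) η)
    (hf' : HasDerivAt f' (f'' η) η)
    (hode : f'' η + ((n - 1) / η) * f' η = -k * profileF α f f' η) :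
    HasDerivAt (profileW n k α f f')
      ((n - 2 - α) * α * η ^ (n - 3 - α) * exp (k * η ^ 2 / 2) * f η) η := by
  have hexp : HasDerivAt (fun x => exp (k * x ^ 2 / 2)) (exp (k * η ^ 2 / 2) * (k * η)) η := by
    convert (((hasDerivAt_pow 2 η).const_mul k).div_const 2).exp using 1
    ring
  have hF : HasDerivAt (profileF α f f') (α * f' η + (1 * f' η + η * f'' η)) η :=
    (hf.const_mul α).add ((hasDerivAt_id η).mul hf')
  refine (((hasDerivAt_rpow_const (Or.inl hη.ne')).mul hexp).mul hF).congr_deriv ?_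
  have hpow : η ^ (n - 2 - α - 1) = η ^ (n - 3 - α) := by ring_nf
  have hη' : η ^ (n - 2 - α) = η ^ (n - 3 - α) * η := by
    rw [← rpow_add_one hη.ne']; ring_nf
  have hf'' : f'' η = -((n - 1) / η) * f' η - k * profileF α f f' η := by linarith
  simp only [Pi.mul_apply]
  rw [hpow, hη', hf'', profileF]
  field_simp
  ring

end Calculus

lemma exists_first_nonpos {g : ℝ → ℝ} {a b : ℝ} (hab : a ≤ b) (hg : ContinuousOn g (Icc a b))
    (ha : 0 < g a) (hb : g b ≤ 0) : ∃ c ∈ Ioc a b, g c ≤ 0 ∧ ∀ x ∈ Ico a c, 0 < g x := by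
  set Z := Icc a b ∩ g ⁻¹' Iic 0
  have hZ : sInf Z ∈ Z := (hg.preimage_isClosed_of_isClosed isClosed_Icc isClosed_Iic).csInf_mem
    ⟨b, ⟨hab, le_rfl⟩, hb⟩ ⟨a, fun x hx => hx.1.1⟩
  refine ⟨sInf Z, ⟨lt_of_le_of_ne hZ.1.1 ?_, hZ.1.2⟩, hZ.2, fun x hx => not_le.mp fun hx' => ?_⟩
  · exact fun h => (h ▸ hZ.2 : g a ≤ 0).not_gt ha
  · exact hx.2.not_ge (csInf_le ⟨a, fun y hy => hy.1.1⟩ ⟨⟨hx.1, hx.2.le.trans hZ.1.2⟩, hx'⟩)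

lemma tendsto_atBot_of_hasDerivAt_le_neg {g g' : ℝ → ℝ} {δ : ℝ} (hδ : 0 < δ)
    (hg : ∀ᶠ x in atTop, HasDerivAt g (g' x) x ∧ g' x ≤ -δ) : Tendsto g atTop atBot := by
  obtain ⟨R, hR⟩ := eventually_atTop.mp hg
  have hanti : AntitoneOn (fun x => g x + δ * x) (Ici R) := by
    refine antitoneOn_of_hasDerivWithinAt_nonpos (convex_Ici R)
      (fun x hx => ((hR x hx).1.continuousAt.add
        (continuousAt_const.mul continuousAt_id)).continuousWithinAt)
      (fun x hx => ((hR x (interior_subset hx)).1.add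
        ((hasDerivAt_id x).const_mul δ)).hasDerivWithinAt)
      fun x hx => ?_
    have := (hR x (interior_subset hx)).2
    simp only [mul_one]
    linarith
  refine tendsto_atBot_mono' _ (eventually_atTop.mpr ⟨R, fun x hx => ?_⟩)
    (tendsto_atBot_add_const_left _ (g R + δ * R)
      (tendsto_id.const_mul_atTop_of_neg (neg_lt_zero.mpr hδ)))
  have := hanti self_mem_Ici hx hx
  simp only [id] at this ⊢
  linarith

lemma eventually_one_le_rpow_mul_exp (m : ℝ) {k : ℝ} (hk : 0 < k) :
    ∀ᶠ x in atTop, 1 ≤ x ^ m * exp (k * x ^ 2 / 2) := by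
  filter_upwards [(tendsto_exp_mul_div_rpow_atTop (-m) (k / 2) (half_pos hk)).eventually_ge_atTop 1,
      eventually_ge_atTop 1] with x hx hx1
  have hx0 : 0 < x := one_pos.trans_le hx1
  calc 1 ≤ exp (k / 2 * x) / x ^ (-m) := hx
    _ = x ^ m * exp (k / 2 * x) := by rw [rpow_neg hx0.le, div_inv_eq_mul, mul_comm]
    _ ≤ x ^ m * exp (k * x ^ 2 / 2) := by
      gcongr
      nlinarith [mul_le_mul_of_nonneg_left hx1 hx0.le]

namespace IsBarenblattProfile

variable {N : ℕ} {γ α : ℝ} {f f' f'' : ℝ → ℝ} (hf : IsBarenblattProfile N γ α f f' f'')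
include hf

lemma hasDerivAt {η : ℝ} (hη : 0 < η) : HasDerivAt f (f' η) η :=
  (hf.1 η hη.le).hasDerivAt (Ici_mem_nhds hη)

lemma hasDerivAt_deriv {η : ℝ} (hη : 0 < η) : HasDerivAt f' (f'' η) η :=
  (hf.2.2.1 η hη).hasDerivAt (Ioi_mem_nhds hη)

lemma continuousOn : ContinuousOn f (Ici 0) :=
  fun x hx => (hf.1 x hx).continuousWithinAt

lemma continuousOn_profileF : ContinuousOn (profileF α f f') (Ici 0) :=
  (continuousOn_const.mul hf.continuousOn).add (continuousOn_id.mul hf.2.1)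

lemma profileF_zero : profileF α f f' 0 = α := by
  simp [profileF, hf.2.2.2.1]

lemma ode_of_profileF_pos {η : ℝ} (hη : 0 < η) (hF : 0 < profileF α f f' η) :
    f'' η + (((N : ℝ) - 1) / η) * f' η = -((1 - γ) / 2) * profileF α f f' η := by
  have h := hf.2.2.2.2.2 η hη
  rw [← profileF, abs_of_pos hF] at h
  linarith

lemma continuousOn_profileW (n k : ℝ) : ContinuousOn (profileW n k α f f') (Ioi 0) :=
  ((continuousOn_id.rpow_const fun x hx => Or.inl (ne_of_gt hx)).mul
    (continuous_exp.comp_continuousOn (by fun_prop))).mul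
    (hf.continuousOn_profileF.mono Ioi_subset_Ici_self)

lemma hasDerivAt_profileW {η : ℝ} (hη : 0 < η) (hF : 0 < profileF α f f' η) :
    HasDerivAt (profileW N ((1 - γ) / 2) α f f')
      ((N - 2 - α) * α * η ^ (N - 3 - α) * exp ((1 - γ) / 2 * η ^ 2 / 2) * f η) η :=
  _root_.hasDerivAt_profileW hη (hf.hasDerivAt hη) (hf.hasDerivAt_deriv hη)
    (hf.ode_of_profileF_pos hη hF)

lemma strictMonoOn_rpow_mul (hα : 0 < α) {D : Set ℝ} (hD : Convex ℝ D) (hD₀ : D ⊆ Ici 0)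
    (hF : ∀ x ∈ interior D, 0 < profileF α f f' x) :
    StrictMonoOn (fun x => x ^ α * f x) D :=
  _root_.strictMonoOn_rpow_mul hα.le hD hD₀ (hf.continuousOn.mono hD₀) (fun _ => hf.hasDerivAt) hF

lemma pos_of_profileF_pos (hα : 0 < α) {b : ℝ} (hF : ∀ x ∈ Ioo 0 b, 0 < profileF α f f' x)
    {η : ℝ} (hη : η ∈ Ioc 0 b) : 0 < f η := by
  have h := hf.strictMonoOn_rpow_mul hα (convex_Icc 0 b) (fun x hx => hx.1)
    (by rwa [interior_Icc]) ⟨le_rfl, hη.1.le.trans hη.2⟩ ⟨hη.1.le, hη.2⟩ hη.1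
  simp only [zero_rpow hα.ne', zero_mul] at h
  exact pos_of_mul_pos_right h (rpow_nonneg hη.1.le _)

lemma lt_of_exists_root (hα : 0 < α) (hroot : ∃ η, 0 < η ∧ profileF α f f' η = 0) :
    (N : ℝ) - 2 < α := by
  obtain ⟨η₁, hη₁, hF₁⟩ := hroot
  by_contra! hN
  obtain ⟨c, hc, hFc, hFpos⟩ := exists_first_nonpos hη₁.le
    (hf.continuousOn_profileF.mono Icc_subset_Ici_self) (by rwa [hf.profileF_zero]) hF₁.le
  set W := profileW N ((1 - γ) / 2) α f f'
  have hmono : MonotoneOn W (Icc (c / 2) c) := by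
    refine monotoneOn_of_hasDerivWithinAt_nonneg (convex_Icc _ _)
      (f' := fun x => (N - 2 - α) * α * x ^ (N - 3 - α) * exp ((1 - γ) / 2 * x ^ 2 / 2) * f x)
      ((hf.continuousOn_profileW _ _).mono fun x hx => (half_pos hc.1).trans_le hx.1)
      (fun x hx => ?_) (fun x hx => ?_)
    all_goals
      rw [interior_Icc] at hx
      have hx₀ : 0 < x := (half_pos hc.1).trans hx.1
      have hFx : 0 < profileF α f f' x := hFpos x ⟨hx₀.le, hx.2⟩
    · exact (hf.hasDerivAt_profileW hx₀ hFx).hasDerivWithinAt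
    · have := hf.pos_of_profileF_pos hα (fun y hy => hFpos y ⟨hy.1.le, hy.2⟩) ⟨hx₀, hx.2.le⟩
      have := rpow_pos_of_pos hx₀ (N - 3 - α)
      have : 0 ≤ (N : ℝ) - 2 - α := by linarith
      positivity
  have hW₁ : 0 < W (c / 2) := (profileW_pos_iff (half_pos hc.1)).mpr
    (hFpos _ ⟨(half_pos hc.1).le, half_lt_self hc.1⟩)
  have hW₂ : W c ≤ 0 := not_lt.mp fun h => ((profileW_pos_iff hc.1).mp h).not_ge hFc
  have hc₂ := half_le_self hc.1.le
  linarith [hmono ⟨le_rfl, hc₂⟩ ⟨hc₂, le_rfl⟩ hc₂]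

lemma profileF_pos_of_forall_ne_zero (hα : 0 < α)
    (hroot : ∀ η, 0 < η → profileF α f f' η ≠ 0) {η : ℝ} (hη : 0 < η) :
    0 < profileF α f f' η := by
  by_contra! hF
  obtain ⟨x, hx, hFx⟩ := isPreconnected_Ici.intermediate_value hη.le self_mem_Ici
    hf.continuousOn_profileF ⟨hF, by rw [hf.profileF_zero]; exact hα.le⟩
  rcases (mem_Ici.mp hx).eq_or_lt with rfl | hx₀
  · exact hα.ne' (hf.profileF_zero ▸ hFx)
  · exact hroot x hx₀ hFx

lemma exists_root_of_lt (hα : 0 < α) (hγ : γ < 1) (hN : (N : ℝ) - 2 < α) :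
    ∃ η, 0 < η ∧ profileF α f f' η = 0 := by
  by_contra! hroot
  have hF : ∀ x, 0 < x → 0 < profileF α f f' x := fun x =>
    hf.profileF_pos_of_forall_ne_zero hα hroot
  have hmono := hf.strictMonoOn_rpow_mul hα (convex_Ici 0) subset_rfl
    (by rw [interior_Ici]; exact hF)
  have hlow : ∀ x, 1 ≤ x → f 1 ≤ x ^ α * f x := fun x hx => by
    simpa only [one_rpow, one_mul] using
      hmono.monotoneOn (mem_Ici.mpr zero_le_one) (mem_Ici.mpr (zero_le_one.trans hx)) hx
  have hf₁ : 0 < f 1 := by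
    simpa only [zero_rpow hα.ne', zero_mul, one_rpow, one_mul] using
      hmono self_mem_Ici (mem_Ici.mpr zero_le_one) one_pos
  set k := (1 - γ) / 2 with hk
  have hk₀ : 0 < k := by rw [hk]; linarith
  set δ := -((N - 2 - α) * α * f 1)
  have hcoef : (N - 2 - α) * α < 0 := mul_neg_of_neg_of_pos (by linarith) hα
  have hδ : 0 < δ := neg_pos.mpr (mul_neg_of_neg_of_pos hcoef hf₁)
  have hderiv : ∀ᶠ x in atTop, HasDerivAt (profileW N k α f f')
      ((N - 2 - α) * α * x ^ (N - 3 - α) * exp (k * x ^ 2 / 2) * f x) x ∧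
      (N - 2 - α) * α * x ^ (N - 3 - α) * exp (k * x ^ 2 / 2) * f x ≤ -δ := by
    filter_upwards [eventually_one_le_rpow_mul_exp (N - 3 - 2 * α) hk₀,
      eventually_ge_atTop 1] with x hgrow hx
    have hx₀ : 0 < x := one_pos.trans_le hx
    refine ⟨hf.hasDerivAt_profileW hx₀ (hF x hx₀), ?_⟩
    have hsplit : x ^ (N - 3 - α : ℝ) = x ^ (N - 3 - 2 * α : ℝ) * x ^ α := by
      rw [← rpow_add hx₀]; ring_nf
    have hE : 0 ≤ x ^ (N - 3 - 2 * α : ℝ) * exp (k * x ^ 2 / 2) := by positivity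
    calc (N - 2 - α) * α * x ^ (N - 3 - α) * exp (k * x ^ 2 / 2) * f x
        = (N - 2 - α) * α * (x ^ (N - 3 - 2 * α : ℝ) * exp (k * x ^ 2 / 2)) * (x ^ α * f x) := by
          rw [hsplit]; ring
      _ ≤ (N - 2 - α) * α * (x ^ (N - 3 - 2 * α : ℝ) * exp (k * x ^ 2 / 2)) * f 1 :=
          mul_le_mul_of_nonpos_left (hlow x hx) (mul_nonpos_of_nonpos_of_nonneg hcoef.le hE)
      _ = -δ * (x ^ (N - 3 - 2 * α : ℝ) * exp (k * x ^ 2 / 2)) := by ring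
      _ ≤ -δ := by nlinarith
  obtain ⟨x, hWx, hx₀⟩ := (((tendsto_atBot_of_hasDerivAt_le_neg hδ hderiv).eventually
    (eventually_lt_atBot 0)).and (eventually_gt_atTop 0)).exists
  exact hWx.not_gt ((profileW_pos_iff hx₀).mpr (hF x hx₀))

end IsBarenblattProfile

theorem barenblatt_root_iff_general (N : ℕ) (γ α : ℝ)
    (hγ₂ : γ < 1) (hα : 0 < α)
    (f f' f'' : ℝ → ℝ) (hf : IsBarenblattProfile N γ α f f' f'') :
    (∃ η : ℝ, 0 < η ∧ α * f η + η * f' η = 0) ↔ (N : ℝ) - 2 < α :=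
  ⟨hf.lt_of_exists_root hα, hf.exists_root_of_lt hα hγ₂⟩

theorem barenblatt_root_iff (N : ℕ) (hN : 1 ≤ N) (γ α : ℝ)
    (hγ₁ : -1 < γ) (hγ₂ : γ < 1) (hα : 0 < α)
    (f f' f'' : ℝ → ℝ) (hf : IsBarenblattProfile N γ α f f' f'') :
    (∃ η : ℝ, 0 < η ∧ α * f η + η * f' η = 0) ↔ (N : ℝ) - 2 < α :=
  barenblatt_root_iff_general N γ α hγ₂ hα f f' f'' hf
end

section
/- Let N ≥ 1 be an integer, −1 < γ < 1, α > 0, and let f : (0,∞) → ℝ be twice differentiable with f''(η) + ((N−1)/η)·f'(η) = −(1/2)·(α·f(η) + η·f'(η)) + (γ/2)·|α·f(η) + η·f'(η)| for all η > 0. Define u : ℝ^N × (0,∞) → ℝ by u(x,t) = t^{−α/2}·f(‖x‖/√t). Then for every t > 0 and every x ∈ ℝ^N with x ≠ 0, u is differentiable in t and twice differentiable in x at (x,t), and ∂u/∂t(x,t) + γ·|∂u/∂t(x,t)| = Δu(x,t), where Δu denotes the Laplacian in the space variable x, i.e. the sum of the N second partial derivatives ∑_{i=1}^N ∂²u/∂x_i².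 -/
/-! For fixed `t > 0` the ansatz is radial, `u(·, t) = g(‖·‖)` with `g ρ = t^(-α/2) f(ρ/√t)`.
Away from the origin the Laplacian of a radial function is `g'' + (N-1)/r g'`, which for this `g`
is `t^(-α/2-1)` times the left side of the profile ODE at `η = ‖x‖/√t`, while
`∂ₜu = -(1/2) t^(-α/2-1) (α f(η) + η f'(η))`. As `t^(-α/2-1) > 0`, the profile ODE multiplied
by it is exactly `u_t + γ|u_t| = Δu`. -/

open Filter Topology InnerProductSpace

section Radial

variable {F : Type*} [NormedAddCommGroup F] [InnerProductSpace ℝ F] {g : ℝ → ℝ} {y v : F}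

theorem hasFDerivAt_norm (hy : y ≠ 0) :
    HasFDerivAt (fun z : F => ‖z‖) (‖y‖⁻¹ • innerSL ℝ y) y := by
  have hsqrt : HasDerivAt Real.sqrt (1 / (2 * √(‖y‖ ^ 2))) (‖y‖ ^ 2) :=
    Real.hasDerivAt_sqrt (by positivity)
  have h := hsqrt.comp_hasFDerivAt y (hasStrictFDerivAt_norm_sq y).hasFDerivAt
  simp only [Function.comp_def, Real.sqrt_sq (norm_nonneg _)] at h
  refine h.congr_fderiv ?_
  ext w
  simp only [one_div, mul_inv_rev, smul_apply, coe_innerSL_apply, nsmul_eq_mul, Nat.cast_ofNat,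
    smul_eq_mul]
  field_simp

theorem hasFDerivAt_comp_norm (hy : y ≠ 0) (hg : DifferentiableAt ℝ g ‖y‖) :
    HasFDerivAt (fun z : F => g ‖z‖) ((deriv g ‖y‖ / ‖y‖) • innerSL ℝ y) y := by
  refine (hg.hasDerivAt.comp_hasFDerivAt y (hasFDerivAt_norm hy)).congr_fderiv ?_
  ext w
  simp [smul_smul, div_eq_mul_inv]

theorem differentiableAt_fderiv_comp_norm (hy : y ≠ 0)
    (hg : ∀ᶠ ρ in 𝓝 ‖y‖, DifferentiableAt ℝ g ρ) (hg' : DifferentiableAt ℝ (deriv g) ‖y‖) :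
    DifferentiableAt ℝ (fderiv ℝ fun z : F => g ‖z‖) y := by
  have hfderiv : (fderiv ℝ fun z : F => g ‖z‖) =ᶠ[𝓝 y]
      fun z => (deriv g ‖z‖ / ‖z‖) • innerSL ℝ z := by
    filter_upwards [isOpen_ne.mem_nhds hy, (continuous_norm.tendsto y).eventually hg]
      with z hz hgz
    exact (hasFDerivAt_comp_norm hz hgz).fderiv
  have hnorm : DifferentiableAt ℝ (fun z : F => ‖z‖) y := differentiableAt_id.norm ℝ hy
  have hcoeff : DifferentiableAt ℝ (fun z : F => deriv g ‖z‖ / ‖z‖) y := by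
    simp only [div_eq_mul_inv]
    exact (hg'.comp y hnorm).fun_mul (hnorm.fun_inv (norm_ne_zero_iff.mpr hy))
  exact hfderiv.differentiableAt_iff.mpr (hcoeff.smul (innerSL ℝ).differentiableAt)

theorem hasDerivAt_norm_add_smul {s : ℝ} (h : y + s • v ≠ 0) :
    HasDerivAt (fun s : ℝ => ‖y + s • v‖) (⟪y + s • v, v⟫_ℝ / ‖y + s • v‖) s := by
  have hline : HasDerivAt (fun s : ℝ => y + s • v) v s := by
    simpa using ((hasDerivAt_id s).smul_const v).const_add y
  refine ((hasFDerivAt_norm h).comp_hasDerivAt s hline).congr_deriv ?_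
  rw [div_eq_inv_mul]
  rfl

theorem iteratedDeriv_two_comp_norm_add_smul (hy : y ≠ 0)
    (hg : ∀ᶠ ρ in 𝓝 ‖y‖, DifferentiableAt ℝ g ρ) (hg' : DifferentiableAt ℝ (deriv g) ‖y‖) :
    iteratedDeriv 2 (fun s : ℝ => g ‖y + s • v‖) 0 =
      deriv (deriv g) ‖y‖ * (⟪y, v⟫_ℝ / ‖y‖) ^ 2 +
        deriv g ‖y‖ * (‖v‖ ^ 2 - (⟪y, v⟫_ℝ / ‖y‖) ^ 2) / ‖y‖ := by
  have hline : Tendsto (fun s : ℝ => y + s • v) (𝓝 0) (𝓝 y) := by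
    simpa using ((continuous_id.smul continuous_const).const_add y).tendsto' (0 : ℝ) y
  have hfirst : deriv (fun s : ℝ => g ‖y + s • v‖) =ᶠ[𝓝 0]
      fun s => deriv g ‖y + s • v‖ * (⟪y + s • v, v⟫_ℝ / ‖y + s • v‖) := by
    filter_upwards [hline.eventually (isOpen_ne.mem_nhds hy),
      hline.norm.eventually hg] with s hs hgs
    exact (hgs.hasDerivAt.comp s (hasDerivAt_norm_add_smul hs)).deriv
  have hinner : HasDerivAt (fun s : ℝ => ⟪y + s • v, v⟫_ℝ) (‖v‖ ^ 2) 0 := by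
    simp only [inner_add_left, inner_smul_left, real_inner_self_eq_norm_sq, RCLike.conj_to_real]
    simpa using ((hasDerivAt_id (0 : ℝ)).mul_const (‖v‖ ^ 2)).const_add ⟪y, v⟫_ℝ
  have hnorm := hasDerivAt_norm_add_smul (v := v) (s := 0) (by simpa using hy)
  simp only [zero_smul, add_zero] at hnorm
  have hsecond := (hg'.hasDerivAt.comp_of_eq 0 hnorm (by simp)).fun_mul
    (hinner.fun_div hnorm (by simpa using hy))
  rw [iteratedDeriv_succ, iteratedDeriv_one, hfirst.deriv_eq]
  refine hsecond.deriv.trans ?_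
  simp only [Function.comp_apply, zero_smul, add_zero]
  have hy' : ‖y‖ ≠ 0 := norm_ne_zero_iff.mpr hy
  field_simp

end Radial

theorem sum_iteratedDeriv_two_comp_norm_add_single {ι : Type*} [Fintype ι] [DecidableEq ι]
    {g : ℝ → ℝ} {x : EuclideanSpace ℝ ι} (hx : x ≠ 0)
    (hg : ∀ᶠ ρ in 𝓝 ‖x‖, DifferentiableAt ℝ g ρ) (hg' : DifferentiableAt ℝ (deriv g) ‖x‖) :
    ∑ i, iteratedDeriv 2 (fun s : ℝ => g ‖x + s • EuclideanSpace.single i (1 : ℝ)‖) 0 =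
      deriv (deriv g) ‖x‖ + ((Fintype.card ι - 1) / ‖x‖) * deriv g ‖x‖ := by
  have hr : ‖x‖ ≠ 0 := norm_ne_zero_iff.mpr hx
  have hsum : ∑ i, (x i / ‖x‖) ^ 2 = 1 := by
    simp only [div_pow, ← Finset.sum_div, ← EuclideanSpace.real_norm_sq_eq]
    field_simp
  simp only [iteratedDeriv_two_comp_norm_add_smul hx hg hg', EuclideanSpace.inner_single_right,
    PiLp.norm_single, norm_one, one_mul, RCLike.conj_to_real]
  rw [Finset.sum_add_distrib, ← Finset.mul_sum, hsum, ← Finset.sum_div, ← Finset.mul_sum,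
    Finset.sum_sub_distrib, hsum, Finset.sum_const, Finset.card_univ, nsmul_eq_mul]
  ring

theorem deriv_const_mul_comp_div_const (c a : ℝ) (f : ℝ → ℝ) :
    deriv (fun ρ => c * f (ρ / a)) = fun ρ => c / a * deriv f (ρ / a) := by
  funext ρ
  simp only [deriv_const_mul_field', div_eq_inv_mul _ a]
  rw [deriv_comp_mul_left a⁻¹ f ρ, smul_eq_mul]
  ring

theorem DifferentiableAt.const_mul_comp_div_const {f : ℝ → ℝ} (c a : ℝ) {ρ : ℝ}
    (hf : DifferentiableAt ℝ f (ρ / a)) :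
    DifferentiableAt ℝ (fun ρ => c * f (ρ / a)) ρ :=
  (hf.comp ρ (differentiableAt_id.div_const a)).const_mul c

theorem hasDerivAt_rpow_mul_comp_div_sqrt {f : ℝ → ℝ} (α r : ℝ) {t : ℝ} (ht : 0 < t)
    (hf : DifferentiableAt ℝ f (r / √t)) :
    HasDerivAt (fun s : ℝ => s ^ (-α / 2) * f (r / √s))
      (t ^ (-α / 2) / t * (-(1 / 2) * (α * f (r / √t) + r / √t * deriv f (r / √t)))) t := by
  have hst : 0 < √t := Real.sqrt_pos.mpr ht
  have hpow : HasDerivAt (fun s : ℝ => s ^ (-α / 2)) (-α / 2 * t ^ (-α / 2 - 1)) t :=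
    Real.hasDerivAt_rpow_const (Or.inl ht.ne')
  have hη := (hasDerivAt_const t r).fun_div (Real.hasDerivAt_sqrt ht.ne') hst.ne'
  refine (hpow.mul (hf.hasDerivAt.comp t hη)).congr_deriv ?_
  rw [Real.rpow_sub ht, Real.rpow_one, Real.sq_sqrt ht.le, Function.comp_apply]
  field_simp
  ring

theorem barenblatt_selfsimilar_solves_general (N : ℕ) (γ α : ℝ)
    (f : ℝ → ℝ)
    (hf : ∀ η : ℝ, 0 < η → DifferentiableAt ℝ f η ∧ DifferentiableAt ℝ (deriv f) η)
    (hode : ∀ η : ℝ, 0 < η →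
      deriv (deriv f) η + (((N : ℝ) - 1) / η) * deriv f η =
        -(1/2) * (α * f η + η * deriv f η) + (γ/2) * |α * f η + η * deriv f η|)
    (u : EuclideanSpace ℝ (Fin N) → ℝ → ℝ)
    (hu : ∀ (y : EuclideanSpace ℝ (Fin N)) (s : ℝ),
      u y s = s ^ (-α/2 : ℝ) * f (‖y‖ / Real.sqrt s)) :
    ∀ (x : EuclideanSpace ℝ (Fin N)) (t : ℝ), 0 < t → x ≠ 0 →
      DifferentiableAt ℝ (fun s : ℝ => u x s) t ∧
      DifferentiableAt ℝ (fun y => u y t) x ∧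
      DifferentiableAt ℝ (fun y => fderiv ℝ (fun z => u z t) y) x ∧
      deriv (fun s : ℝ => u x s) t + γ * |deriv (fun s : ℝ => u x s) t| =
        ∑ i : Fin N, iteratedDeriv 2
          (fun s : ℝ => u (x + s • EuclideanSpace.single i (1 : ℝ)) t) 0 := by
  intro x t ht hx
  simp only [hu]
  have hr : 0 < ‖x‖ := norm_pos_iff.mpr hx
  have hst : 0 < √t := Real.sqrt_pos.mpr ht
  have hη : 0 < ‖x‖ / √t := div_pos hr hst
  have hg : ∀ ρ > 0, DifferentiableAt ℝ (fun ρ => t ^ (-α / 2) * f (ρ / √t)) ρ :=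
    fun ρ hρ => .const_mul_comp_div_const _ _ (hf _ (div_pos hρ hst)).1
  have hg' : DifferentiableAt ℝ (deriv fun ρ => t ^ (-α / 2) * f (ρ / √t)) ‖x‖ := by
    rw [deriv_const_mul_comp_div_const]
    exact .const_mul_comp_div_const _ _ (hf _ hη).2
  have hg_near := (eventually_gt_nhds hr).mono hg
  have htime := hasDerivAt_rpow_mul_comp_div_sqrt α ‖x‖ ht (hf _ hη).1
  refine ⟨htime.differentiableAt, (hg _ hr).comp x (differentiableAt_id.norm ℝ hx),
    differentiableAt_fderiv_comp_norm hx hg_near hg', ?_⟩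
  rw [sum_iteratedDeriv_two_comp_norm_add_single hx hg_near hg', deriv_const_mul_comp_div_const,
    deriv_const_mul_comp_div_const, htime.deriv, Fintype.card_fin]
  have hT : 0 < t ^ (-α / 2) / t := div_pos (Real.rpow_pos_of_pos ht _) ht
  have habs_half : |-(1 / 2 : ℝ)| = 1 / 2 := by norm_num
  rw [abs_mul, abs_of_pos hT, abs_mul, habs_half]
  calc _ = t ^ (-α / 2) / t * (deriv (deriv f) (‖x‖ / √t) +
          ((N - 1) / (‖x‖ / √t)) * deriv f (‖x‖ / √t)) := by
        rw [hode _ hη]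
        ring
    _ = _ := by
        field_simp
        rw [Real.sq_sqrt ht.le]

/-- Substituting the self-similar ansatz `u(x,t) = t^(-α/2) f(‖x‖/√t)` into the
Barenblatt equation `u_t + γ|u_t| = Δu`: if the profile `f` is twice differentiable on
`(0,∞)` and satisfies the profile ODE, then for every `t > 0` and `x ≠ 0` the function
`u` is differentiable in `t`, twice differentiable in `x`, and solves the equation,
the Laplacian being the sum of the `N` second partial derivatives. -/
theorem barenblatt_selfsimilar_solves (N : ℕ) (hN : 1 ≤ N) (γ α : ℝ)
    (hγ₁ : -1 < γ) (hγ₂ : γ < 1) (hα : 0 < α)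
    (f : ℝ → ℝ)
    (hf : ∀ η : ℝ, 0 < η → DifferentiableAt ℝ f η ∧ DifferentiableAt ℝ (deriv f) η)
    (hode : ∀ η : ℝ, 0 < η →
      deriv (deriv f) η + (((N : ℝ) - 1) / η) * deriv f η =
        -(1/2) * (α * f η + η * deriv f η) + (γ/2) * |α * f η + η * deriv f η|)
    (u : EuclideanSpace ℝ (Fin N) → ℝ → ℝ)
    (hu : ∀ (y : EuclideanSpace ℝ (Fin N)) (s : ℝ),
      u y s = s ^ (-α/2 : ℝ) * f (‖y‖ / Real.sqrt s)) :
    ∀ (x : EuclideanSpace ℝ (Fin N)) (t : ℝ), 0 < t → x ≠ 0 →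
      DifferentiableAt ℝ (fun s : ℝ => u x s) t ∧
      DifferentiableAt ℝ (fun y => u y t) x ∧
      DifferentiableAt ℝ (fun y => fderiv ℝ (fun z => u z t) y) x ∧
      deriv (fun s : ℝ => u x s) t + γ * |deriv (fun s : ℝ => u x s) t| =
        ∑ i : Fin N, iteratedDeriv 2
          (fun s : ℝ => u (x + s • EuclideanSpace.single i (1 : ℝ)) t) 0 :=
  barenblatt_selfsimilar_solves_general N γ α f hf hode u hu
end

section
/- Let N ≥ 1 be an integer, α ∈ ℝ, and κ > 0. Define f : [0,∞) → ℝ by f(η) = M(α/2, N/2; −κη²/2). Then f(0) = 1, f'(0) = 0, and for every η > 0: f''(η) + ((N−1)/η)·f'(η) = −κ·(α·f(η) + η·f'(η)). (Taking κ = (1−γ)/2 this exhibits the Kummer-series representation f₁(η) = M(α/2, N/2; −(1−γ)η²/4) of the solution of the first linear Cauchy problem arising from the Barenblatt profile equation.) -/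
/-!
Substituting `z = -κη²/2` turns the radial equation `f'' + ((N-1)/η) f' = -κ (α f + η f')` into
Kummer's equation `z M'' + (b - z) M' - a M = 0` with `a = α/2`, `b = N/2`. The latter holds for
`M = ∑ c_k z^k` term by term, because the Kummer coefficients satisfy the recurrence
`(b + k)(k + 1) c_{k+1} = (a + k) c_k`. The same recurrence gives `|c_k| ≤ (1 + |a|/b)^k / k!`,
so the series converges absolutely everywhere and may be differentiated termwise.
-/

/-- The Kummer confluent hypergeometric function
`M(a, b; z) = ∑_{k} ((a)_k / (b)_k) z^k / k!` (real parameters, real variable),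
where `(x)_k` is the rising factorial (Pochhammer symbol). -/
noncomputable def kummerM (a b z : ℝ) : ℝ :=
  ∑' k : ℕ, ((ascPochhammer ℝ k).eval a / (ascPochhammer ℝ k).eval b) *
    z ^ k / (Nat.factorial k)

open scoped Nat

noncomputable def powerSeriesSum (c : ℕ → ℝ) (z : ℝ) : ℝ := ∑' k, c k * z ^ k

theorem powerSeriesSum_zero (c : ℕ → ℝ) : powerSeriesSum c 0 = c 0 := by
  rw [powerSeriesSum, tsum_eq_single 0 fun k hk => by simp [hk]]
  simp

def derivCoeff (c : ℕ → ℝ) (k : ℕ) : ℝ := (k + 1) * c (k + 1)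

def EntireCoeffs (c : ℕ → ℝ) : Prop := ∀ r : ℝ, Summable fun k => |c k * r ^ k|

namespace EntireCoeffs

variable {c : ℕ → ℝ}

theorem summable (hc : EntireCoeffs c) (z : ℝ) : Summable fun k => c k * z ^ k :=
  (hc z).of_abs

theorem hasSum (hc : EntireCoeffs c) (z : ℝ) :
    HasSum (fun k => c k * z ^ k) (powerSeriesSum c z) :=
  (hc.summable z).hasSum

theorem of_abs_le_pow_div_factorial {q : ℝ} (h : ∀ k, |c k| ≤ q ^ k / k !) :
    EntireCoeffs c := fun r =>
  (Real.summable_pow_div_factorial (q * |r|)).of_nonneg_of_le (fun _ => abs_nonneg _) fun k => by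
    rw [abs_mul, abs_pow, mul_pow, mul_div_right_comm]
    exact mul_le_mul_of_nonneg_right (h k) (by positivity)

theorem derivCoeff (hc : EntireCoeffs c) : EntireCoeffs (derivCoeff c) := fun r => by
  refine ((summable_nat_add_iff 1).mpr (hc (2 * |r| + 2))).of_nonneg_of_le
    (fun _ => abs_nonneg _) fun k => ?_
  have hk : ((k : ℝ) + 1) ≤ 2 ^ (k + 1) := by exact_mod_cast (Nat.lt_two_pow_self).le
  have hr : |r| ^ k ≤ (|r| + 1) ^ (k + 1) :=
    (pow_le_pow_left₀ (abs_nonneg r) (by linarith) k).trans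
      (pow_le_pow_right₀ (by linarith [abs_nonneg r]) k.le_succ)
  calc |_root_.derivCoeff c k * r ^ k| = |c (k + 1)| * (((k : ℝ) + 1) * |r| ^ k) := by
        rw [_root_.derivCoeff, abs_mul, abs_mul, abs_pow,
          abs_of_nonneg (by positivity : (0 : ℝ) ≤ k + 1)]
        ring
    _ ≤ |c (k + 1)| * (2 ^ (k + 1) * (|r| + 1) ^ (k + 1)) := by gcongr
    _ = |c (k + 1) * (2 * |r| + 2) ^ (k + 1)| := by
        rw [abs_mul, abs_pow, abs_of_nonneg (by positivity : (0 : ℝ) ≤ 2 * |r| + 2), ← mul_pow]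
        ring

theorem tsum_mul_nat_mul_pow_pred (hc : EntireCoeffs c) (z : ℝ) :
    ∑' k : ℕ, c k * (k * z ^ (k - 1)) = powerSeriesSum (_root_.derivCoeff c) z := by
  have hsum : Summable fun k : ℕ => c k * (k * z ^ (k - 1)) :=
    (summable_nat_add_iff 1).mp <| (hc.derivCoeff.summable z).congr fun k => by
      rw [_root_.derivCoeff, Nat.add_sub_cancel]; push_cast; ring
  rw [hsum.tsum_eq_zero_add, powerSeriesSum]
  simp only [CharP.cast_eq_zero, zero_mul, mul_zero, zero_add]
  refine tsum_congr fun k => ?_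
  rw [_root_.derivCoeff, Nat.add_sub_cancel]; push_cast; ring

theorem hasDerivAt (hc : EntireCoeffs c) (z : ℝ) :
    HasDerivAt (powerSeriesSum c) (powerSeriesSum (_root_.derivCoeff c) z) z := by
  set R := |z| + 1
  have hR : 0 ≤ R := by positivity
  have hu : Summable fun k => |c k * (k * R ^ (k - 1))| :=
    (summable_nat_add_iff 1).mp <| (hc.derivCoeff R).congr fun k => by
      rw [_root_.derivCoeff, Nat.add_sub_cancel]; push_cast; ring_nf
  have hz : z ∈ Metric.ball (0 : ℝ) R := by simp [R]
  rw [← hc.tsum_mul_nat_mul_pow_pred]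
  refine hasDerivAt_tsum_of_isPreconnected hu Metric.isOpen_ball
    (convex_ball 0 R).isPreconnected (fun k y _ => (hasDerivAt_pow k y).const_mul (c k))
    (fun k y hy => ?_) hz (hc.summable z) hz
  rw [mem_ball_zero_iff, Real.norm_eq_abs] at hy
  simp only [Real.norm_eq_abs, abs_mul, abs_pow, Nat.abs_cast, abs_of_nonneg hR]
  gcongr

theorem hasSum_nat_mul (hc : EntireCoeffs c) (z : ℝ) :
    HasSum (fun k : ℕ => k * c k * z ^ k) (z * powerSeriesSum (_root_.derivCoeff c) z) := by
  refine (hasSum_nat_add_iff' 1).mp ?_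
  simp only [Finset.sum_range_one, CharP.cast_eq_zero, zero_mul, sub_zero]
  exact ((hc.derivCoeff.hasSum z).mul_left z).congr_fun fun k => by
    rw [_root_.derivCoeff]; push_cast; ring

theorem kummer_equation {a b : ℝ} (hc : EntireCoeffs c)
    (hrec : ∀ k : ℕ, (b + k) * _root_.derivCoeff c k = (a + k) * c k) (z : ℝ) :
    z * powerSeriesSum (_root_.derivCoeff (_root_.derivCoeff c)) z
      + (b - z) * powerSeriesSum (_root_.derivCoeff c) z - a * powerSeriesSum c z = 0 := by
  have hsum := (((hc.derivCoeff.hasSum_nat_mul z).add ((hc.derivCoeff.hasSum z).mul_left b)).sub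
    (hc.hasSum_nat_mul z)).sub ((hc.hasSum z).mul_left a)
  have hzero : ∀ k : ℕ, k * _root_.derivCoeff c k * z ^ k + b * (_root_.derivCoeff c k * z ^ k)
      - k * c k * z ^ k - a * (c k * z ^ k) = 0 := fun k => by
    linear_combination z ^ k * hrec k
  rw [funext hzero] at hsum
  linear_combination (hasSum_zero.unique hsum).symm

end EntireCoeffs

noncomputable def kummerCoeff (a b : ℝ) (k : ℕ) : ℝ :=
  (ascPochhammer ℝ k).eval a / (ascPochhammer ℝ k).eval b / k !

section Kummer

variable {a b : ℝ}

theorem kummerM_eq_powerSeriesSum (a b z : ℝ) :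
    kummerM a b z = powerSeriesSum (kummerCoeff a b) z :=
  tsum_congr fun k => by rw [kummerCoeff]; ring

theorem kummerCoeff_zero (a b : ℝ) : kummerCoeff a b 0 = 1 := by
  simp [kummerCoeff]

theorem kummerCoeff_recurrence (hb : 0 < b) (k : ℕ) :
    (b + k) * derivCoeff (kummerCoeff a b) k = (a + k) * kummerCoeff a b k := by
  have hpoch := (ascPochhammer_pos k b hb).ne'
  have hbk : b + k ≠ 0 := by positivity
  simp only [derivCoeff, kummerCoeff, ascPochhammer_succ_eval, Nat.factorial_succ]
  push_cast
  field_simp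

theorem abs_kummerCoeff_le (hb : 0 < b) (k : ℕ) :
    |kummerCoeff a b k| ≤ (1 + |a| / b) ^ k / k ! := by
  set q := 1 + |a| / b
  induction k with
  | zero => simp [kummerCoeff_zero]
  | succ k ih =>
    have hbk : 0 < b + k := by positivity
    have hak : |a + k| ≤ q * (b + k) := by
      have : |a| / b * b = |a| := div_mul_cancel₀ _ hb.ne'
      have : 0 ≤ |a| / b * k := by positivity
      have : |a + k| ≤ |a| + k := by simpa using abs_add_le a k
      nlinarith
    have hrec : (b + k) * ((k + 1) * |kummerCoeff a b (k + 1)|) =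
        |a + k| * |kummerCoeff a b k| := by
      have := congrArg abs (kummerCoeff_recurrence (a := a) hb k)
      rwa [abs_mul, abs_mul, abs_of_pos hbk, derivCoeff, abs_mul,
        abs_of_pos (by positivity : (0 : ℝ) < k + 1)] at this
    have hstep : (k + 1) * |kummerCoeff a b (k + 1)| ≤ q * |kummerCoeff a b k| := by
      refine le_of_mul_le_mul_left ?_ hbk
      rw [hrec]
      calc |a + k| * |kummerCoeff a b k| ≤ q * (b + k) * |kummerCoeff a b k| := by gcongr
        _ = (b + k) * (q * |kummerCoeff a b k|) := by ring
    calc |kummerCoeff a b (k + 1)| = (k + 1) * |kummerCoeff a b (k + 1)| / (k + 1) := by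
          field_simp
      _ ≤ q * (q ^ k / k !) / (k + 1) := by
          gcongr ?_ / _
          exact hstep.trans (mul_le_mul_of_nonneg_left ih (by positivity))
      _ = q ^ (k + 1) / (k + 1)! := by
          rw [Nat.factorial_succ]; push_cast; field_simp; ring

theorem entireCoeffs_kummerCoeff (a : ℝ) (hb : 0 < b) : EntireCoeffs (kummerCoeff a b) :=
  EntireCoeffs.of_abs_le_pow_div_factorial (abs_kummerCoeff_le hb)

end Kummer

theorem hasDerivAt_neg_mul_sq_div_two (κ η : ℝ) :
    HasDerivAt (fun η => -κ * η ^ 2 / 2) (-κ * η) η :=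
  (((hasDerivAt_pow 2 η).const_mul (-κ)).div_const 2).congr_deriv (by norm_num; ring)

section Radial

variable {M M₁ M₂ f : ℝ → ℝ} {κ : ℝ}

theorem deriv_comp_quadratic (hM : ∀ z, HasDerivAt M (M₁ z) z)
    (hf : ∀ η, f η = M (-κ * η ^ 2 / 2)) :
    deriv f = fun η => M₁ (-κ * η ^ 2 / 2) * (-κ * η) := by
  funext η
  rw [funext hf]
  exact ((hM _).comp η (hasDerivAt_neg_mul_sq_div_two κ η)).deriv

theorem radial_equation_of_kummer_equation {n α : ℝ} (hM : ∀ z, HasDerivAt M (M₁ z) z)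
    (hM₁ : ∀ z, HasDerivAt M₁ (M₂ z) z)
    (hkummer : ∀ z, z * M₂ z + (n / 2 - z) * M₁ z - α / 2 * M z = 0)
    (hf : ∀ η, f η = M (-κ * η ^ 2 / 2)) {η : ℝ} (hη : η ≠ 0) :
    deriv (deriv f) η + ((n - 1) / η) * deriv f η = -κ * (α * f η + η * deriv f η) := by
  have hf' := deriv_comp_quadratic hM hf
  have hf'' : HasDerivAt (deriv f)
      (M₂ (-κ * η ^ 2 / 2) * (-κ * η) * (-κ * η) + M₁ (-κ * η ^ 2 / 2) * -κ) η := by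
    rw [hf']
    exact ((hM₁ _).comp η (hasDerivAt_neg_mul_sq_div_two κ η)).mul
      ((hasDerivAt_id η).const_mul (-κ)) |>.congr_deriv (by simp)
  rw [hf''.deriv, hf', hf]
  set z := -κ * η ^ 2 / 2 with hz
  have hcancel : (n - 1) / η * (M₁ z * (-κ * η)) = -κ * (n - 1) * M₁ z := by
    field_simp
  rw [hcancel]
  linear_combination (-2 * κ) * hkummer z + 2 * κ * (M₂ z - M₁ z) * hz

end Radial

theorem kummer_solves_linear_profile_general (N : ℕ) (hN : 1 ≤ N) (α κ : ℝ)
    (f : ℝ → ℝ)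
    (hf : ∀ η : ℝ, f η = kummerM (α/2) ((N : ℝ)/2) (-κ * η ^ 2 / 2)) :
    f 0 = 1 ∧ deriv f 0 = 0 ∧
    ∀ η : ℝ, 0 < η →
      deriv (deriv f) η + (((N : ℝ) - 1) / η) * deriv f η =
        -κ * (α * f η + η * deriv f η) := by
  have hb : (0 : ℝ) < N / 2 := div_pos (Nat.cast_pos.mpr hN) two_pos
  have hc := entireCoeffs_kummerCoeff (α / 2) hb
  have hfc (η : ℝ) : f η = powerSeriesSum (kummerCoeff (α / 2) (N / 2)) (-κ * η ^ 2 / 2) := by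
    rw [hf, kummerM_eq_powerSeriesSum]
  refine ⟨?_, ?_, fun η hη => ?_⟩
  · simp [hfc, powerSeriesSum_zero, kummerCoeff_zero]
  · rw [deriv_comp_quadratic hc.hasDerivAt hfc]
    simp
  · exact radial_equation_of_kummer_equation hc.hasDerivAt hc.derivCoeff.hasDerivAt
      (hc.kummer_equation (kummerCoeff_recurrence hb)) hfc hη.ne'

/-- The function `f(η) = M(α/2, N/2; -κη²/2)` solves the linear Cauchy problem
`f'' + ((N-1)/η) f' = -κ (α f + η f')`, `f(0) = 1`, `f'(0) = 0`. -/
theorem kummer_solves_linear_profile (N : ℕ) (hN : 1 ≤ N) (α κ : ℝ) (hκ : 0 < κ)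
    (f : ℝ → ℝ)
    (hf : ∀ η : ℝ, f η = kummerM (α/2) ((N : ℝ)/2) (-κ * η ^ 2 / 2)) :
    f 0 = 1 ∧ deriv f 0 = 0 ∧
    ∀ η : ℝ, 0 < η →
      deriv (deriv f) η + (((N : ℝ) - 1) / η) * deriv f η =
        -κ * (α * f η + η * deriv f η) :=
  kummer_solves_linear_profile_general N hN α κ f hf
end

section
/- Let N ≥ 1 be an integer, α ∈ ℝ, κ > 0, and define f₁(η) = M(α/2, N/2; −κη²/2). Then for every η ≥ 0: α·f₁(η) + η·f₁'(η) = α·e^{−κη²/2}·M(N/2 − α/2 − 1, N/2; κη²/2). In particular, if α > 0, then η > 0 satisfies α·f₁(η) + η·f₁'(η) = 0 if and only if M(N/2 − α/2 − 1, N/2; κη²/2) = 0. -/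
/-!
Put `a = α/2`, `b = N/2` and `w = -κη²/2`. Since `η d/dη = 2w d/dw` and
`M'(a, b; z) = (a/b) M(a+1, b+1; z)`, the left-hand side is `2(a M(a, b; w) + w M'(a, b; w))`,
which the contiguous relation `a M(a, b; z) + z M'(a, b; z) = a M(a+1, b; z)` (termwise, from
`(a)_k (a+k) = a (a+1)_k`) turns into `α M(a+1, b; w)`. Kummer's transformation
`M(c, b; w) = e^w M(b-c, b; -w)`, a Cauchy product whose coefficients are summed by the
Chu–Vandermonde identity, gives the right-hand side. The roots statement follows because
`α e^w ≠ 0`.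
-/

open Finset Polynomial
open scoped Nat

noncomputable def kummerTerm (a b : ℝ) (k : ℕ) (z : ℝ) : ℝ :=
  (ascPochhammer ℝ k).eval a / (ascPochhammer ℝ k).eval b * z ^ k / k !

lemma kummerM_eq_tsum (a b z : ℝ) : kummerM a b z = ∑' k, kummerTerm a b k z := rfl

lemma ascPochhammer_eval_succ_left (x : ℝ) (k : ℕ) :
    (ascPochhammer ℝ (k + 1)).eval x = x * (ascPochhammer ℝ k).eval (x + 1) := by
  simp [ascPochhammer_succ_left, eval_comp]

lemma ascPochhammer_eval_succ_div_succ (a b : ℝ) (k : ℕ) :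
    (ascPochhammer ℝ (k + 1)).eval a / (ascPochhammer ℝ (k + 1)).eval b =
      a / b * ((ascPochhammer ℝ k).eval (a + 1) / (ascPochhammer ℝ k).eval (b + 1)) := by
  rw [ascPochhammer_eval_succ_left, ascPochhammer_eval_succ_left, mul_div_mul_comm]

lemma abs_ascPochhammer_eval_div_le {b : ℝ} (hb : 0 < b) (a : ℝ) (k : ℕ) :
    |(ascPochhammer ℝ k).eval a / (ascPochhammer ℝ k).eval b| ≤ max 1 (|a| / b) ^ k := by
  induction k with
  | zero => simp
  | succ k ih =>
    have hbk : 0 < b + k := by positivity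
    have hstep : |(a + k) / (b + k)| ≤ max 1 (|a| / b) := by
      rw [abs_div, abs_of_pos hbk, div_le_iff₀ hbk]
      have ha : |a| ≤ max 1 (|a| / b) * b := (div_le_iff₀ hb).1 (le_max_right _ _)
      have hk : (k : ℝ) ≤ max 1 (|a| / b) * k :=
        le_mul_of_one_le_left (Nat.cast_nonneg k) (le_max_left _ _)
      calc |a + k| ≤ |a| + k := by simpa using abs_add_le a (k : ℝ)
        _ ≤ max 1 (|a| / b) * b + max 1 (|a| / b) * k := add_le_add ha hk
        _ = max 1 (|a| / b) * (b + k) := by ring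
    rw [ascPochhammer_succ_eval, ascPochhammer_succ_eval, mul_div_mul_comm, abs_mul, pow_succ]
    exact mul_le_mul ih hstep (abs_nonneg _) (by positivity)

lemma abs_kummerTerm_le {b : ℝ} (hb : 0 < b) (a : ℝ) (k : ℕ) (z : ℝ) :
    |kummerTerm a b k z| ≤ (max 1 (|a| / b) * |z|) ^ k / k ! := by
  rw [kummerTerm, abs_div, abs_mul, abs_pow, Nat.abs_cast, mul_pow]
  gcongr
  exact abs_ascPochhammer_eval_div_le hb a k

lemma summable_norm_kummerTerm {b : ℝ} (hb : 0 < b) (a z : ℝ) :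
    Summable fun k => ‖kummerTerm a b k z‖ :=
  .of_nonneg_of_le (fun _ => norm_nonneg _) (fun k => abs_kummerTerm_le hb a k z)
    (Real.summable_pow_div_factorial _)

lemma summable_kummerTerm {b : ℝ} (hb : 0 < b) (a z : ℝ) :
    Summable fun k => kummerTerm a b k z :=
  (summable_norm_kummerTerm hb a z).of_norm

lemma hasDerivAt_kummerTerm_succ (a b : ℝ) (k : ℕ) (z : ℝ) :
    HasDerivAt (kummerTerm a b (k + 1)) (a / b * kummerTerm (a + 1) (b + 1) k z) z := by
  have h := ((hasDerivAt_pow (k + 1) z).const_mul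
    ((ascPochhammer ℝ (k + 1)).eval a / (ascPochhammer ℝ (k + 1)).eval b)).div_const
    ((k + 1) ! : ℝ)
  refine h.congr_deriv ?_
  rw [kummerTerm, ascPochhammer_eval_succ_div_succ, Nat.factorial_succ]
  push_cast
  field_simp

lemma hasDerivAt_kummerM {b : ℝ} (hb : 0 < b) (a z : ℝ) :
    HasDerivAt (kummerM a b) (a / b * kummerM (a + 1) (b + 1) z) z := by
  have hb1 : 0 < b + 1 := by linarith
  set R := |z| + 1
  have hsum : HasDerivAt (fun y => ∑' k, kummerTerm a b (k + 1) y)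
      (∑' k, a / b * kummerTerm (a + 1) (b + 1) k z) z :=
    hasDerivAt_tsum_of_isPreconnected
      ((Real.summable_pow_div_factorial (max 1 (|a + 1| / (b + 1)) * R)).mul_left |a / b|)
      Metric.isOpen_ball (convex_ball 0 R).isPreconnected
      (fun k y _ => hasDerivAt_kummerTerm_succ a b k y)
      (fun k y hy => by
        rw [mem_ball_zero_iff, Real.norm_eq_abs] at hy
        rw [norm_mul, Real.norm_eq_abs, Real.norm_eq_abs]
        refine mul_le_mul_of_nonneg_left ((abs_kummerTerm_le hb1 _ k y).trans ?_) (abs_nonneg _)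
        gcongr)
      (Metric.mem_ball_self (by positivity))
      ((summable_nat_add_iff 1).2 (summable_kummerTerm hb a 0))
      (by simp [R])
  have hM : kummerM a b = fun y => 1 + ∑' k, kummerTerm a b (k + 1) y := funext fun y => by
    rw [kummerM_eq_tsum, (summable_kummerTerm hb a y).tsum_eq_zero_add]
    simp [kummerTerm]
  rw [tsum_mul_left, ← kummerM_eq_tsum] at hsum
  rw [hM]
  exact hsum.const_add _

lemma kummerTerm_succ_contiguous (a b : ℝ) (k : ℕ) (z : ℝ) :
    a * kummerTerm (a + 1) b (k + 1) z =
      a * kummerTerm a b (k + 1) z + z * (a / b * kummerTerm (a + 1) (b + 1) k z) := by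
  have hk : (k + 1 : ℝ) ≠ 0 := by positivity
  simp only [kummerTerm]
  rw [ascPochhammer_succ_eval k (a + 1), ascPochhammer_eval_succ_left a,
    ascPochhammer_eval_succ_left b, Nat.factorial_succ]
  push_cast
  field_simp
  ring

lemma mul_kummerM_add_one {b : ℝ} (hb : 0 < b) (a z : ℝ) :
    a * kummerM (a + 1) b z = a * kummerM a b z + z * (a / b * kummerM (a + 1) (b + 1) z) := by
  have hsplit : ∀ c, kummerM c b z = 1 + ∑' k, kummerTerm c b (k + 1) z := fun c => by
    rw [kummerM_eq_tsum, (summable_kummerTerm hb c z).tsum_eq_zero_add]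
    simp [kummerTerm]
  have hs₁ := ((summable_nat_add_iff 1).2 (summable_kummerTerm hb a z)).mul_left a
  have hs₂ :=
    ((summable_kummerTerm (b := b + 1) (by linarith) (a + 1) z).mul_left (a / b)).mul_left z
  rw [hsplit, hsplit, mul_add, mul_add, ← tsum_mul_left, ← tsum_mul_left, kummerM_eq_tsum,
    ← tsum_mul_left, ← tsum_mul_left, add_assoc, ← hs₁.tsum_add hs₂]
  simp only [kummerTerm_succ_contiguous]

lemma sum_choose_mul_neg_one_pow_mul_ascPochhammer_div {b : ℝ} (hb : 0 < b) (c : ℝ) (n : ℕ) :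
    ∑ i ∈ range (n + 1), (n.choose i : ℝ) *
        ((-1) ^ i * ((ascPochhammer ℝ i).eval c / (ascPochhammer ℝ i).eval b)) =
      (ascPochhammer ℝ n).eval (b - c) / (ascPochhammer ℝ n).eval b := by
  induction n generalizing b c with
  | zero => simp
  | succ n ih =>
    have hb1 : 0 < b + 1 := by linarith
    have hshift : ∀ i ∈ range (n + 1),
        (n.choose i : ℝ) * ((-1) ^ (i + 1) *
          ((ascPochhammer ℝ (i + 1)).eval c / (ascPochhammer ℝ (i + 1)).eval b)) =
        -(c / b) * ((n.choose i : ℝ) * ((-1) ^ i *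
          ((ascPochhammer ℝ i).eval (c + 1) / (ascPochhammer ℝ i).eval (b + 1)))) :=
      fun i _ => by rw [ascPochhammer_eval_succ_div_succ, pow_succ]; ring
    rw [sum_choose_succ_mul (fun i _ => (-1) ^ i *
      ((ascPochhammer ℝ i).eval c / (ascPochhammer ℝ i).eval b)) n, sum_congr rfl hshift,
      ← mul_sum, ih hb, ih hb1, add_sub_add_right_eq_sub]
    have hX := (ascPochhammer_pos n b hb).ne'
    have hY := (ascPochhammer_pos n (b + 1) hb1).ne'
    have hrel :
        b * (ascPochhammer ℝ n).eval (b + 1) = (ascPochhammer ℝ n).eval b * (b + n) := by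
      rw [← ascPochhammer_eval_succ_left, ascPochhammer_succ_eval]
    rw [ascPochhammer_succ_eval n (b - c), ascPochhammer_eval_succ_left b]
    field_simp
    linear_combination (ascPochhammer ℝ n).eval (b - c) * hrel

lemma kummerM_eq_exp_mul {b : ℝ} (hb : 0 < b) (c w : ℝ) :
    kummerM c b w = Real.exp w * kummerM (b - c) b (-w) := by
  have hexp : Real.exp w = ∑' n : ℕ, w ^ n / n ! := by
    rw [Real.exp_eq_exp_ℝ, NormedSpace.exp_eq_tsum_div]
  have hexp_norm : Summable fun n : ℕ => ‖w ^ n / (n ! : ℝ)‖ := by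
    simpa [norm_div, norm_pow] using Real.summable_pow_div_factorial |w|
  rw [hexp, mul_comm, kummerM_eq_tsum, kummerM_eq_tsum,
    tsum_mul_tsum_eq_tsum_sum_range_of_summable_norm (summable_norm_kummerTerm hb _ _) hexp_norm]
  refine tsum_congr fun n => ?_
  have hterm : ∀ k ∈ range (n + 1), kummerTerm (b - c) b k (-w) * (w ^ (n - k) / (n - k) !) =
      (n.choose k : ℝ) * ((-1) ^ k *
        ((ascPochhammer ℝ k).eval (b - c) / (ascPochhammer ℝ k).eval b)) * (w ^ n / n !) := by
    intro k hk
    have hkn : k ≤ n := Nat.lt_succ_iff.1 (mem_range.1 hk)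
    have hfac : (n.choose k : ℝ) * k ! * (n - k) ! = n ! := by
      exact_mod_cast Nat.choose_mul_factorial_mul_factorial hkn
    have hchoose : (n.choose k : ℝ) ≠ 0 := by exact_mod_cast (Nat.choose_pos hkn).ne'
    have hpow : w ^ k * w ^ (n - k) = w ^ n := by rw [← pow_add, Nat.add_sub_cancel' hkn]
    rw [kummerTerm, neg_pow, ← hpow, ← hfac]
    field_simp
  rw [sum_congr rfl hterm, ← sum_mul, sum_choose_mul_neg_one_pow_mul_ascPochhammer_div hb,
    sub_sub_cancel, kummerTerm, mul_div_assoc]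

lemma mul_kummerM_add_deriv_comp_sq {b : ℝ} (hb : 0 < b) (α κ η : ℝ) :
    α * kummerM (α / 2) b (-κ * η ^ 2 / 2) +
        η * deriv (fun t => kummerM (α / 2) b (-κ * t ^ 2 / 2)) η =
      α * Real.exp (-κ * η ^ 2 / 2) * kummerM (b - α / 2 - 1) b (κ * η ^ 2 / 2) := by
  have hinner : HasDerivAt (fun t => -κ * t ^ 2 / 2) (-κ * η) η := by
    refine (((hasDerivAt_pow 2 η).const_mul (-κ)).div_const 2).congr_deriv ?_
    push_cast
    ring
  have hf : HasDerivAt (fun t => kummerM (α / 2) b (-κ * t ^ 2 / 2))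
      (α / 2 / b * kummerM (α / 2 + 1) (b + 1) (-κ * η ^ 2 / 2) * (-κ * η)) η :=
    (hasDerivAt_kummerM hb _ _).comp η hinner
  rw [hf.deriv]
  have hcontig := mul_kummerM_add_one hb (α / 2) (-κ * η ^ 2 / 2)
  have hkummer := kummerM_eq_exp_mul hb (α / 2 + 1) (-κ * η ^ 2 / 2)
  rw [show b - (α / 2 + 1) = b - α / 2 - 1 by ring,
    show -(-κ * η ^ 2 / 2) = κ * η ^ 2 / 2 by ring] at hkummer
  linear_combination -2 * hcontig + α * hkummer

theorem kummer_root_identity_general (N : ℕ) (hN : 1 ≤ N) (α κ : ℝ)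
    (f₁ : ℝ → ℝ)
    (hf₁ : ∀ η : ℝ, f₁ η = kummerM (α/2) ((N : ℝ)/2) (-κ * η ^ 2 / 2)) :
    (∀ η : ℝ, 0 ≤ η →
      α * f₁ η + η * deriv f₁ η =
        α * Real.exp (-κ * η ^ 2 / 2) *
          kummerM ((N : ℝ)/2 - α/2 - 1) ((N : ℝ)/2) (κ * η ^ 2 / 2)) ∧
    (0 < α → ∀ η : ℝ, 0 < η →
      (α * f₁ η + η * deriv f₁ η = 0 ↔
        kummerM ((N : ℝ)/2 - α/2 - 1) ((N : ℝ)/2) (κ * η ^ 2 / 2) = 0)) := by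
  have hb : (0 : ℝ) < N / 2 := by
    have : (1 : ℝ) ≤ N := by exact_mod_cast hN
    linarith
  have hid : ∀ η : ℝ, α * f₁ η + η * deriv f₁ η = α * Real.exp (-κ * η ^ 2 / 2) *
      kummerM ((N : ℝ)/2 - α/2 - 1) ((N : ℝ)/2) (κ * η ^ 2 / 2) :=
    fun η => by rw [funext hf₁]; exact mul_kummerM_add_deriv_comp_sq hb α κ η
  refine ⟨fun η _ => hid η, fun hα η _ => ?_⟩
  rw [hid η, mul_eq_zero_iff_left (mul_pos hα (Real.exp_pos _)).ne']

/-- For `f₁(η) = M(α/2, N/2; -κη²/2)` one has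
`α f₁ + η f₁' = α e^{-κη²/2} M(N/2 - α/2 - 1, N/2; κη²/2)`, so for `α > 0` the
positive roots of `α f₁ + η f₁' = 0` are exactly the points where
`M(N/2 - α/2 - 1, N/2; κη²/2) = 0`. -/
theorem kummer_root_identity (N : ℕ) (hN : 1 ≤ N) (α κ : ℝ) (hκ : 0 < κ)
    (f₁ : ℝ → ℝ)
    (hf₁ : ∀ η : ℝ, f₁ η = kummerM (α/2) ((N : ℝ)/2) (-κ * η ^ 2 / 2)) :
    (∀ η : ℝ, 0 ≤ η →
      α * f₁ η + η * deriv f₁ η =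
        α * Real.exp (-κ * η ^ 2 / 2) *
          kummerM ((N : ℝ)/2 - α/2 - 1) ((N : ℝ)/2) (κ * η ^ 2 / 2)) ∧
    (0 < α → ∀ η : ℝ, 0 < η →
      (α * f₁ η + η * deriv f₁ η = 0 ↔
        kummerM ((N : ℝ)/2 - α/2 - 1) ((N : ℝ)/2) (κ * η ^ 2 / 2) = 0)) :=
  kummer_root_identity_general N hN α κ f₁ hf₁
end

section
/- Let f be a Barenblatt profile with exponent α. If η₀ > 0 satisfies α·f(η₀) + η₀·f'(η₀) = 0, then f(η₀) ≠ 0. (Equivalently: if f(η₀) = 0 and f'(η₀) = 0 at some η₀ > 0, then by uniqueness for the profile ODE f would vanish identically, contradicting f(0) = 1.) -/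
/-!
If `f` vanished at a root `η₀` of `α f + η f'`, then `f'` would vanish there too. For `η` in a
compact interval `[a, η₀]` with `a > 0` the profile equation is a first-order system for `(f, f')`
whose right-hand side is Lipschitz (the absolute value is 1-Lipschitz), so backward uniqueness
forces `f = 0` on `(0, η₀]`, which contradicts `f 0 = 1` by continuity at `0`.
-/

open Set Filter Topology

noncomputable def barenblattField (N γ α η : ℝ) (p : ℝ × ℝ) : ℝ × ℝ :=
  (p.2, -((N - 1) / η) * p.2 - (1/2) * (α * p.1 + η * p.2) + (γ/2) * |α * p.1 + η * p.2|)

@[simp]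
theorem barenblattField_zero (N γ α η : ℝ) : barenblattField N γ α η 0 = 0 := by
  simp [barenblattField]

theorem lipschitzWith_barenblattField {N γ α a b η : ℝ} (ha : 0 < a) (hη : η ∈ Icc a b) :
    LipschitzWith (1 + |N - 1| / a + (1 + |γ|) * (|α| + b)).toNNReal
      (barenblattField N γ α η) := by
  have hη₀ : 0 < η := ha.trans_le hη.1
  have hb : 0 ≤ b := hη₀.le.trans hη.2
  have hK : 1 ≤ 1 + |N - 1| / a + (1 + |γ|) * (|α| + b) := by
    have := div_nonneg (abs_nonneg (N - 1)) ha.le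
    nlinarith [abs_nonneg γ, abs_nonneg α]
  refine LipschitzWith.of_dist_le_mul fun p q => ?_
  rw [Real.coe_toNNReal _ (zero_le_one.trans hK)]
  have hd₁ : |p.1 - q.1| ≤ dist p q := by
    rw [← Real.dist_eq, Prod.dist_eq]; exact le_max_left _ _
  have hd₂ : |p.2 - q.2| ≤ dist p q := by
    rw [← Real.dist_eq, Prod.dist_eq]; exact le_max_right _ _
  have hc : |(N - 1) / η| ≤ |N - 1| / a := by
    rw [abs_div, abs_of_pos hη₀]
    exact div_le_div_of_nonneg_left (abs_nonneg _) ha hη.1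
  set ℓp := α * p.1 + η * p.2
  set ℓq := α * q.1 + η * q.2
  have hℓ : |ℓp - ℓq| ≤ (|α| + b) * dist p q := calc
    |ℓp - ℓq| = |α * (p.1 - q.1) + η * (p.2 - q.2)| := by congr 1; ring
    _ ≤ |α| * |p.1 - q.1| + η * |p.2 - q.2| := by
      simpa [abs_mul, abs_of_pos hη₀] using abs_add_le (α * (p.1 - q.1)) (η * (p.2 - q.2))
    _ ≤ (|α| + b) * dist p q := by nlinarith [abs_nonneg α, abs_nonneg (p.2 - q.2), hη.2]
  simp only [barenblattField]
  rw [Prod.dist_eq, max_le_iff, Real.dist_eq, Real.dist_eq]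
  constructor
  · exact hd₂.trans (le_mul_of_one_le_left dist_nonneg hK)
  · have hγ : |γ / 2 * (|ℓp| - |ℓq|)| ≤ |γ| / 2 * |ℓp - ℓq| := by
      rw [abs_mul, abs_div, abs_two]
      exact mul_le_mul_of_nonneg_left (abs_abs_sub_abs_le_abs_sub _ _) (by positivity)
    calc _ = |-((N - 1) / η) * (p.2 - q.2) + -(1/2) * (ℓp - ℓq) + γ / 2 * (|ℓp| - |ℓq|)| := by
          congr 1; ring
      _ ≤ |(N - 1) / η| * |p.2 - q.2| + 1 / 2 * |ℓp - ℓq| + |γ| / 2 * |ℓp - ℓq| := by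
          refine (abs_add_three _ _ _).trans ?_
          rw [abs_mul, abs_mul, abs_neg, abs_neg, abs_of_pos (by norm_num : (0:ℝ) < 1 / 2)]
          gcongr
      _ ≤ |N - 1| / a * dist p q + (1 + |γ|) * (|α| + b) * dist p q := by
          have := div_nonneg (abs_nonneg (N - 1)) ha.le
          nlinarith [abs_nonneg γ, abs_nonneg (p.2 - q.2), abs_nonneg (ℓp - ℓq)]
      _ ≤ _ := by nlinarith [dist_nonneg (x := p) (y := q)]

namespace IsBarenblattProfile

variable {N : ℕ} {γ α : ℝ} {f f' f'' : ℝ → ℝ}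

theorem hasDerivAt_barenblattField (hf : IsBarenblattProfile N γ α f f' f'') {η : ℝ}
    (hη : 0 < η) :
    HasDerivAt (fun t => (f t, f' t)) (barenblattField N γ α η (f η, f' η)) η := by
  obtain ⟨hfd, -, hf'd, -, -, hode⟩ := hf
  have hf'' : f'' η = -((N - 1) / η) * f' η - 1 / 2 * (α * f η + η * f' η)
      + γ / 2 * |α * f η + η * f' η| := by linarith [hode η hη]
  rw [barenblattField, ← hf'']
  exact ((hfd η hη.le).hasDerivAt (Ici_mem_nhds hη)).prodMk
    ((hf'd η hη).hasDerivAt (Ioi_mem_nhds hη))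

theorem eventually_ne_zero (hf : IsBarenblattProfile N γ α f f' f'') :
    ∀ᶠ η in 𝓝[>] 0, f η ≠ 0 := by
  obtain ⟨hfd, -, -, hf0, -, -⟩ := hf
  have hlim : Tendsto f (𝓝[>] 0) (𝓝 (f 0)) :=
    ((hfd 0 self_mem_Ici).continuousWithinAt.mono Ioi_subset_Ici_self).tendsto
  rw [hf0] at hlim
  exact hlim.eventually_ne one_ne_zero

theorem eqOn_zero_of_eq_zero_of_deriv_eq_zero (hf : IsBarenblattProfile N γ α f f' f'')
    {η₀ : ℝ} (h₀ : f η₀ = 0) (h₁ : f' η₀ = 0) :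
    EqOn f 0 (Ioc 0 η₀) := by
  intro a ha
  have hcont : ContinuousOn (fun t => (f t, f' t)) (Icc a η₀) := fun t ht =>
    (hf.hasDerivAt_barenblattField (ha.1.trans_le ht.1)).continuousAt.continuousWithinAt
  have hsol : EqOn (fun t => (f t, f' t)) (fun _ => 0) (Icc a η₀) :=
    ODE_solution_unique_of_mem_Icc_left (s := fun _ => univ)
      (fun t ht => (lipschitzWith_barenblattField ha.1 (Ioc_subset_Icc_self ht)).lipschitzOnWith)
      hcont
      (fun t ht => (hf.hasDerivAt_barenblattField (ha.1.trans ht.1)).hasDerivWithinAt)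
      (fun _ _ => mem_univ _) continuousOn_const
      (fun t _ => by simpa using hasDerivWithinAt_const t (Iic t) (0 : ℝ × ℝ))
      (fun _ _ => mem_univ _) (by simp [h₀, h₁])
  exact congrArg Prod.fst (hsol (left_mem_Icc.mpr ha.2))

end IsBarenblattProfile

theorem barenblatt_nonzero_at_root_general (N : ℕ) (γ α : ℝ)
    (f f' f'' : ℝ → ℝ) (hf : IsBarenblattProfile N γ α f f' f'')
    (η₀ : ℝ) (hη₀ : 0 < η₀) (hroot : α * f η₀ + η₀ * f' η₀ = 0) :
    f η₀ ≠ 0 := by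
  intro hfη
  have hf'η : f' η₀ = 0 := by simpa [hfη, hη₀.ne'] using hroot
  obtain ⟨η, hne, hη⟩ := (hf.eventually_ne_zero.and (Ioc_mem_nhdsGT hη₀)).exists
  exact hne (hf.eqOn_zero_of_eq_zero_of_deriv_eq_zero hfη hf'η hη)

/-- At any positive root of `α f + η f' = 0`, the Barenblatt profile does not vanish. -/
theorem barenblatt_nonzero_at_root (N : ℕ) (hN : 1 ≤ N) (γ α : ℝ)
    (hγ₁ : -1 < γ) (hγ₂ : γ < 1) (hα : 0 < α)
    (f f' f'' : ℝ → ℝ) (hf : IsBarenblattProfile N γ α f f' f'')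
    (η₀ : ℝ) (hη₀ : 0 < η₀) (hroot : α * f η₀ + η₀ * f' η₀ = 0) :
    f η₀ ≠ 0 :=
  barenblatt_nonzero_at_root_general N γ α f f' f'' hf η₀ hη₀ hroot
end

section
/- Let N ≥ 1 be an integer, κ > 0, α > N − 2 with α > 0, and a > 0. Let f be twice differentiable on [a,∞) and satisfy f''(η) + ((N−1)/η)·f'(η) = −κ·(α·f(η) + η·f'(η)) for all η > a. Set F(η) = α·f(η) + η·f'(η), and assume F(a) = 0, f(a)·F(η) < 0 for every η > a, and f(η) → 0, f'(η) → 0, f''(η) → 0 as η → ∞. Then f does not change sign on [a,∞): f(η)·f(a) > 0 for every η ≥ a. -/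
/-! Normalise by linearity to `F := α f + η f' < 0` beyond `a`. The flux `η ^ (N-1) f'`
has derivative `-κ η ^ (N-1) F > 0`, so it is strictly increasing. Suppose `f'` were
somewhere `≥ 0`; then `f' ≥ 0` from there on. Since
`(F e^{κη²/2})' = (α + 2 - N) f' e^{κη²/2} ≥ 0`, the negative quantity `F e^{κη²/2}` is
increasing, and comparing `f'` with this derivative gives the Gaussian bound
`-f ≤ C e^{-κη²/2}`. As `η f' < -α f`, the flux then tends to `0`, which is impossible for a
strictly increasing flux that is already `≥ 0`. Hence `f' < 0`, and `f` decreases strictly to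
its limit `0`, so it is positive. -/

open Set Filter Real Topology

section Monotonicity

variable {D : Set ℝ} {g g' : ℝ → ℝ}

theorem Convex.monotoneOn_of_hasDerivAt_nonneg (hD : Convex ℝ D)
    (hg : ∀ x ∈ D, HasDerivAt g (g' x) x) (hg' : ∀ x ∈ D, 0 ≤ g' x) : MonotoneOn g D :=
  monotoneOn_of_hasDerivWithinAt_nonneg hD
    (fun x hx => (hg x hx).continuousAt.continuousWithinAt)
    (fun x hx => (hg x (interior_subset hx)).hasDerivWithinAt)
    (fun x hx => hg' x (interior_subset hx))

theorem Convex.strictMonoOn_of_hasDerivAt_pos (hD : Convex ℝ D)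
    (hg : ∀ x ∈ D, HasDerivAt g (g' x) x) (hg' : ∀ x ∈ D, 0 < g' x) : StrictMonoOn g D :=
  strictMonoOn_of_hasDerivWithinAt_pos hD
    (fun x hx => (hg x hx).continuousAt.continuousWithinAt)
    (fun x hx => (hg x (interior_subset hx)).hasDerivWithinAt)
    (fun x hx => hg' x (interior_subset hx))

theorem Convex.strictAntiOn_of_hasDerivAt_neg (hD : Convex ℝ D)
    (hg : ∀ x ∈ D, HasDerivAt g (g' x) x) (hg' : ∀ x ∈ D, g' x < 0) : StrictAntiOn g D :=
  strictAntiOn_of_hasDerivWithinAt_neg hD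
    (fun x hx => (hg x hx).continuousAt.continuousWithinAt)
    (fun x hx => (hg x (interior_subset hx)).hasDerivWithinAt)
    (fun x hx => hg' x (interior_subset hx))

end Monotonicity

section Limits

variable {ι β : Type*} [SemilatticeSup ι] [Preorder β] [TopologicalSpace β]
  [OrderClosedTopology β] {g : ι → β} {b : ι} {L : β}

theorem MonotoneOn.apply_le_of_tendsto (hg : MonotoneOn g (Ici b))
    (hL : Tendsto g atTop (𝓝 L)) : g b ≤ L :=
  haveI : Nonempty ι := ⟨b⟩
  ge_of_tendsto hL ((eventually_ge_atTop b).mono fun _ hT => hg self_mem_Ici hT hT)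

theorem AntitoneOn.le_apply_of_tendsto (hg : AntitoneOn g (Ici b))
    (hL : Tendsto g atTop (𝓝 L)) : L ≤ g b :=
  haveI : Nonempty ι := ⟨b⟩
  le_of_tendsto hL ((eventually_ge_atTop b).mono fun _ hT => hg self_mem_Ici hT hT)

end Limits

theorem tendsto_rpow_mul_exp_neg_mul_sq_atTop_nhds_zero (s : ℝ) {b : ℝ} (hb : 0 < b) :
    Tendsto (fun x : ℝ => x ^ s * exp (-b * x ^ 2)) atTop (𝓝 0) :=
  (rpow_mul_exp_neg_mul_sq_isLittleO_exp_neg hb s).tendsto_zero_of_tendsto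
    (tendsto_exp_atBot.comp <| tendsto_id.const_mul_atTop_of_neg (by norm_num))

def SolvesProfileEquation (n κ α : ℝ) (f f' f'' : ℝ → ℝ) (s : Set ℝ) : Prop :=
  ∀ x ∈ s, HasDerivAt f (f' x) x ∧ HasDerivAt f' (f'' x) x ∧
    f'' x + (n - 1) / x * f' x = -κ * (α * f x + x * f' x)

namespace SolvesProfileEquation

variable {n κ α : ℝ} {f f' f'' : ℝ → ℝ} {s t : Set ℝ} {a : ℝ}

theorem mono (h : SolvesProfileEquation n κ α f f' f'' s) (hts : t ⊆ s) :
    SolvesProfileEquation n κ α f f' f'' t :=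
  fun x hx => h x (hts hx)

theorem const_mul (h : SolvesProfileEquation n κ α f f' f'' s) (c : ℝ) :
    SolvesProfileEquation n κ α (fun x => c * f x) (fun x => c * f' x) (fun x => c * f'' x) s :=
  fun x hx =>
    have ⟨hf, hf', hode⟩ := h x hx
    ⟨hf.const_mul c, hf'.const_mul c, by linear_combination c * hode⟩

theorem hasDerivAt_rpow_mul_deriv (h : SolvesProfileEquation n κ α f f' f'' s) {x : ℝ}
    (hx : x ∈ s) (hx₀ : 0 < x) :
    HasDerivAt (fun y => y ^ (n - 1) * f' y)
      (-κ * x ^ (n - 1) * (α * f x + x * f' x)) x := by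
  obtain ⟨-, hf', hode⟩ := h x hx
  refine ((hasDerivAt_rpow_const (p := n - 1) (Or.inl hx₀.ne')).mul hf').congr_deriv ?_
  rw [rpow_sub_one hx₀.ne']
  linear_combination x ^ (n - 1) * hode

theorem hasDerivAt_mul_exp_sq (h : SolvesProfileEquation n κ α f f' f'' s) {x : ℝ}
    (hx : x ∈ s) (hx₀ : x ≠ 0) :
    HasDerivAt (fun y => (α * f y + y * f' y) * exp (κ / 2 * y ^ 2))
      ((α + 2 - n) * f' x * exp (κ / 2 * x ^ 2)) x := by
  obtain ⟨hf, hf', hode⟩ := h x hx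
  have hF : HasDerivAt (fun y => α * f y + y * f' y) (α * f' x + (1 * f' x + x * f'' x)) x :=
    (hf.const_mul α).add ((hasDerivAt_id x).mul hf')
  have hexp := ((hasDerivAt_pow 2 x).const_mul (κ / 2)).exp
  refine (hF.mul hexp).congr_deriv ?_
  have hxf'' : x * f'' x = -(n - 1) * f' x - κ * x * (α * f x + x * f' x) := by
    field_simp at hode
    linear_combination hode
  linear_combination exp (κ / 2 * x ^ 2) * hxf''

theorem strictMonoOn_rpow_mul_deriv (h : SolvesProfileEquation n κ α f f' f'' (Ioi a))
    (ha : 0 < a) (hκ : 0 < κ) (hF : ∀ x ∈ Ioi a, α * f x + x * f' x < 0) :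
    StrictMonoOn (fun x => x ^ (n - 1) * f' x) (Ioi a) :=
  (convex_Ioi a).strictMonoOn_of_hasDerivAt_pos
    (fun _ hx => h.hasDerivAt_rpow_mul_deriv hx (ha.trans hx))
    (fun x hx => mul_pos_of_neg_of_neg
      (mul_neg_of_neg_of_pos (neg_neg_of_pos hκ) (rpow_pos_of_pos (ha.trans hx) _)) (hF x hx))

theorem monotoneOn_mul_exp_sq (h : SolvesProfileEquation n κ α f f' f'' (Ici a))
    (ha : 0 < a) (hαn : n - 2 < α) (hf' : ∀ x ∈ Ici a, 0 ≤ f' x) :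
    MonotoneOn (fun y => (α * f y + y * f' y) * exp (κ / 2 * y ^ 2)) (Ici a) :=
  (convex_Ici a).monotoneOn_of_hasDerivAt_nonneg
    (fun x hx => h.hasDerivAt_mul_exp_sq hx (ha.trans_le hx).ne')
    (fun x hx => mul_nonneg (mul_nonneg (by linarith) (hf' x hx)) (exp_pos _).le)

theorem neg_le_mul_exp_neg_sq (h : SolvesProfileEquation n κ α f f' f'' (Ici a))
    (ha : 0 < a) (hκ : 0 ≤ κ) (hαn : n - 2 < α)
    (hF : ∀ x ∈ Ici a, α * f x + x * f' x ≤ 0) (hf' : ∀ x ∈ Ici a, 0 ≤ f' x)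
    (hf0 : Tendsto f atTop (𝓝 0)) :
    ∃ C, ∀ x ∈ Ici a, -f x ≤ C * exp (-(κ / 2) * x ^ 2) := by
  set G := fun y => (α * f y + y * f' y) * exp (κ / 2 * y ^ 2)
  have hβ : 0 < α + 2 - n := by linarith
  have hGmono : MonotoneOn G (Ici a) := h.monotoneOn_mul_exp_sq ha hαn hf'
  refine ⟨-G a / (α + 2 - n), fun x hx => ?_⟩
  set E := exp (-(κ / 2) * x ^ 2)
  have hxT : Ici x ⊆ Ici a := Ici_subset_Ici.2 hx
  -- `f' ≤ f' e^{κ(y² - x²)/2} = G' E / (α + 2 - n)` on `[x, ∞)`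
  have hΦ : MonotoneOn (fun y => G y * (E / (α + 2 - n)) - f y) (Ici x) := by
    refine (convex_Ici x).monotoneOn_of_hasDerivAt_nonneg
      (fun y hy => ((h.hasDerivAt_mul_exp_sq (hxT hy) (ha.trans_le (hxT hy)).ne').mul_const
        _).sub (h y (hxT hy)).1) (fun y hy => ?_)
    have hexp : 1 ≤ exp (κ / 2 * y ^ 2) * E := by
      rw [← exp_add, one_le_exp_iff]
      have : x ^ 2 ≤ y ^ 2 := pow_le_pow_left₀ (ha.le.trans hx) hy 2
      nlinarith
    have hΦ' : (α + 2 - n) * f' y * exp (κ / 2 * y ^ 2) * (E / (α + 2 - n)) - f' y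
        = f' y * (exp (κ / 2 * y ^ 2) * E - 1) := by
      field_simp
    rw [hΦ']
    exact mul_nonneg (hf' y (hxT hy)) (sub_nonneg.2 hexp)
  have hbound : ∀ᶠ T in atTop, -f x ≤ -G a * (E / (α + 2 - n)) - f T := by
    filter_upwards [eventually_ge_atTop x] with T hT
    have hΦT : G x * (E / (α + 2 - n)) - f x ≤ G T * (E / (α + 2 - n)) - f T :=
      hΦ self_mem_Ici hT hT
    have hGT : G T ≤ 0 := mul_nonpos_of_nonpos_of_nonneg (hF T (hxT hT)) (exp_pos _).le
    have hGx : G a ≤ G x := hGmono self_mem_Ici hx hx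
    have hEβ : 0 ≤ E / (α + 2 - n) := by positivity
    nlinarith [mul_le_mul_of_nonneg_right (by linarith : G T - G x ≤ -G a) hEβ]
  have hlim : Tendsto (fun T => -G a * (E / (α + 2 - n)) - f T) atTop
      (𝓝 (-G a * (E / (α + 2 - n)) - 0)) := tendsto_const_nhds.sub hf0
  calc -f x ≤ -G a * (E / (α + 2 - n)) := by simpa using ge_of_tendsto hlim hbound
    _ = -G a / (α + 2 - n) * E := by ring

theorem tendsto_rpow_mul_deriv_of_deriv_nonneg
    (h : SolvesProfileEquation n κ α f f' f'' (Ici a)) (ha : 0 < a) (hκ : 0 < κ)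
    (hαn : n - 2 < α) (hα : 0 < α) (hF : ∀ x ∈ Ici a, α * f x + x * f' x ≤ 0)
    (hf' : ∀ x ∈ Ici a, 0 ≤ f' x) (hf0 : Tendsto f atTop (𝓝 0)) :
    Tendsto (fun x => x ^ (n - 1) * f' x) atTop (𝓝 0) := by
  obtain ⟨C, hC⟩ := h.neg_le_mul_exp_neg_sq ha hκ.le hαn hF hf' hf0
  have hbound : ∀ x ∈ Ici a,
      x ^ (n - 1) * f' x ≤ α * C * (x ^ (n - 2) * exp (-(κ / 2) * x ^ 2)) := by
    intro x hx
    have hx₀ : 0 < x := ha.trans_le hx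
    have hxf' : x * f' x ≤ α * (C * exp (-(κ / 2) * x ^ 2)) := by
      nlinarith [hF x hx, mul_le_mul_of_nonneg_left (hC x hx) hα.le]
    calc x ^ (n - 1) * f' x = x ^ (n - 2) * (x * f' x) := by
          rw [show n - 1 = n - 2 + 1 by ring, rpow_add_one hx₀.ne']
          ring
      _ ≤ x ^ (n - 2) * (α * (C * exp (-(κ / 2) * x ^ 2))) :=
          mul_le_mul_of_nonneg_left hxf' (rpow_nonneg hx₀.le _)
      _ = α * C * (x ^ (n - 2) * exp (-(κ / 2) * x ^ 2)) := by ring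
  have hdecay := (tendsto_rpow_mul_exp_neg_mul_sq_atTop_nhds_zero (n - 2)
    (half_pos hκ)).const_mul (α * C)
  rw [mul_zero] at hdecay
  refine tendsto_of_tendsto_of_tendsto_of_le_of_le' tendsto_const_nhds hdecay ?_ ?_
  · filter_upwards [eventually_ge_atTop a] with x hx
    exact mul_nonneg (rpow_nonneg (ha.le.trans hx) _) (hf' x hx)
  · filter_upwards [eventually_ge_atTop a] with x hx using hbound x hx

theorem deriv_neg_of_tendsto_zero (h : SolvesProfileEquation n κ α f f' f'' (Ioi a))
    (ha : 0 < a) (hκ : 0 < κ) (hαn : n - 2 < α) (hα : 0 < α)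
    (hF : ∀ x ∈ Ioi a, α * f x + x * f' x < 0) (hf0 : Tendsto f atTop (𝓝 0)) :
    ∀ x ∈ Ioi a, f' x < 0 := by
  intro x₁ hx₁
  by_contra! hf'x₁
  have hflux := h.strictMonoOn_rpow_mul_deriv ha hκ hF
  have hsub : Ici x₁ ⊆ Ioi a := Ici_subset_Ioi.2 hx₁
  have hflux₁ : 0 ≤ x₁ ^ (n - 1) * f' x₁ :=
    mul_nonneg (rpow_pos_of_pos (ha.trans hx₁) _).le hf'x₁
  have hf' : ∀ x ∈ Ici x₁, 0 ≤ f' x := fun x hx =>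
    (mul_nonneg_iff_of_pos_left (rpow_pos_of_pos (ha.trans (hsub hx)) _)).1
      (hflux₁.trans (hflux.monotoneOn hx₁ (hsub hx) hx))
  have hlim := (h.mono hsub).tendsto_rpow_mul_deriv_of_deriv_nonneg (ha.trans hx₁) hκ hαn hα
    (fun x hx => (hF x (hsub hx)).le) hf' hf0
  have hx₁' : x₁ + 1 ∈ Ioi a := lt_trans hx₁ (lt_add_one x₁)
  have hle : (x₁ + 1) ^ (n - 1) * f' (x₁ + 1) ≤ 0 :=
    (hflux.monotoneOn.mono (Ici_subset_Ioi.2 hx₁')).apply_le_of_tendsto hlim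
  have hlt := hflux hx₁ hx₁' (lt_add_one x₁)
  linarith

theorem pos_of_tendsto_zero (h : SolvesProfileEquation n κ α f f' f'' (Ioi a))
    (ha : 0 < a) (hκ : 0 < κ) (hαn : n - 2 < α) (hα : 0 < α)
    (hF : ∀ x ∈ Ioi a, α * f x + x * f' x < 0) (hf0 : Tendsto f atTop (𝓝 0)) :
    ∀ x ∈ Ioi a, 0 < f x := by
  have hanti : StrictAntiOn f (Ioi a) := (convex_Ioi a).strictAntiOn_of_hasDerivAt_neg
    (fun x hx => (h x hx).1) (h.deriv_neg_of_tendsto_zero ha hκ hαn hα hF hf0)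
  intro x hx
  have hx1 : x + 1 ∈ Ioi a := lt_trans hx (lt_add_one x)
  calc 0 ≤ f (x + 1) :=
        (hanti.antitoneOn.mono (Ici_subset_Ioi.2 hx1)).le_apply_of_tendsto hf0
    _ < f x := hanti hx hx1 (lt_add_one x)

end SolvesProfileEquation

theorem no_sign_change_on_last_piece_general (N : ℕ) (κ α : ℝ) (hκ : 0 < κ)
    (hαN : (N : ℝ) - 2 < α) (hα : 0 < α) (a : ℝ) (ha : 0 < a)
    (f f' f'' : ℝ → ℝ)
    (hf : ∀ η ∈ Set.Ici a, HasDerivWithinAt f (f' η) (Set.Ici a) η ∧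
      HasDerivWithinAt f' (f'' η) (Set.Ici a) η)
    (hode : ∀ η : ℝ, a < η →
      f'' η + (((N : ℝ) - 1) / η) * f' η = -κ * (α * f η + η * f' η))
    (hsign : ∀ η : ℝ, a < η → f a * (α * f η + η * f' η) < 0)
    (hf0 : Filter.Tendsto f Filter.atTop (nhds 0)) :
    ∀ η : ℝ, a ≤ η → 0 < f η * f a := by
  have hsol : SolvesProfileEquation N κ α f f' f'' (Ioi a) := fun x hx =>
    ⟨(hf x (Ioi_subset_Ici_self hx)).1.hasDerivAt (Ici_mem_nhds hx),
      (hf x (Ioi_subset_Ici_self hx)).2.hasDerivAt (Ici_mem_nhds hx),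
      hode x hx⟩
  have hpos := (hsol.const_mul (f a)).pos_of_tendsto_zero ha hκ hαN hα
    (fun x hx => by linear_combination hsign x hx) (by simpa using hf0.const_mul (f a))
  intro η hη
  rcases hη.eq_or_lt with rfl | hη
  · have hfa : f a ≠ 0 := fun h0 => by simpa [h0] using hsign (a + 1) (by linarith)
    exact mul_self_pos.2 hfa
  · rw [mul_comm]
    exact hpos η hη

/-- No-sign-change lemma for the last linear piece of the Barenblatt profile
equation: beyond the largest root `a` of `F = α f + η f' = 0`, if `F` keeps a
constant sign opposite to `f(a)` and `f, f', f''` tend to `0` at infinity, then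
the solution `f` of the linear ODE `f'' + ((N-1)/η) f' = -κ F` on `[a,∞)`
does not change sign. -/
theorem no_sign_change_on_last_piece (N : ℕ) (hN : 1 ≤ N) (κ α : ℝ) (hκ : 0 < κ)
    (hαN : (N : ℝ) - 2 < α) (hα : 0 < α) (a : ℝ) (ha : 0 < a)
    (f f' f'' : ℝ → ℝ)
    (hf : ∀ η ∈ Set.Ici a, HasDerivWithinAt f (f' η) (Set.Ici a) η ∧
      HasDerivWithinAt f' (f'' η) (Set.Ici a) η)
    (hode : ∀ η : ℝ, a < η →
      f'' η + (((N : ℝ) - 1) / η) * f' η = -κ * (α * f η + η * f' η))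
    (hFa : α * f a + a * f' a = 0)
    (hsign : ∀ η : ℝ, a < η → f a * (α * f η + η * f' η) < 0)
    (hf0 : Filter.Tendsto f Filter.atTop (nhds 0))
    (hf'0 : Filter.Tendsto f' Filter.atTop (nhds 0))
    (hf''0 : Filter.Tendsto f'' Filter.atTop (nhds 0)) :
    ∀ η : ℝ, a ≤ η → 0 < f η * f a :=
  no_sign_change_on_last_piece_general N κ α hκ hαN hα a ha f f' f'' hf hode hsign hf0
end
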